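/- Let M be a monoid and f : Σ* → M a surjective monoid homomorphism from the free monoid on a finite alphabet Σ. Then M is word hyperbolic (as a semigroup) if and only if there is a regular language R ⊆ Σ* with f(R) = M such that T = { u#v#wʳ | u,v,w ∈ R and ū·v̄ = w̄ } is context-free. -/

import Mathlib

namespace GSM

open ContextFreeGrammar

set_option linter.unusedSectionVars false

variable {T T' Q : Type} [Fintype Q]

/-- Output of a deterministic gsm on a word, starting in state `q`. -/
def outWord (δ : Q → T → Q) (out : Q → T → List T') : Q → List T → List T'
  | _, [] => []
  | q, t :: ts => out q t ++ outWord δ out (δ q t) ts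

/-- Iterated transition function. -/
def dstar (δ : Q → T → Q) : Q → List T → Q
  | q, [] => q
  | q, t :: ts => dstar δ (δ q t) ts

lemma outWord_append (δ : Q → T → Q) (out : Q → T → List T') (q : Q) (x y : List T) :
    outWord δ out q (x ++ y) = outWord δ out q x ++ outWord δ out (dstar δ q x) y := by
  induction x generalizing q with
  | nil => rfl
  | cons t ts ih => simp [outWord, dstar, ih, List.append_assoc]

lemma dstar_append (δ : Q → T → Q) (q : Q) (x y : List T) :
    dstar δ q (x ++ y) = dstar δ (dstar δ q x) y := by
  induction x generalizing q with
  | nil => rfl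
  | cons t ts ih => simp [dstar, ih]

variable {N : Type}

/-- Translation relation between sentential forms: `Tr δ out q u w q'` means `w` is obtained
from `u` by translating terminals through the gsm (threading the state from `q` to `q'`) and
annotating nonterminals with the entry and (guessed) exit states. -/
inductive Tr (δ : Q → T → Q) (out : Q → T → List T') :
    Q → List (Symbol T N) → List (Symbol T' (Option (Q × N × Q))) → Q → Prop
  | nil (q) : Tr δ out q [] [] q
  | term {q u w q'} (t) : Tr δ out (δ q t) u w q' →
      Tr δ out q (Symbol.terminal t :: u) ((out q t).map Symbol.terminal ++ w) q'
  | nt {q u w q'} (A) (p) : Tr δ out p u w q' →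
      Tr δ out q (Symbol.nonterminal A :: u) (Symbol.nonterminal (some (q, A, p)) :: w) q'

variable {δ : Q → T → Q} {out : Q → T → List T'}

lemma Tr.append {q q₁ q₂ : Q} {u₁ u₂ : List (Symbol T N)} {w₁ w₂}
    (h₁ : Tr δ out q u₁ w₁ q₁) (h₂ : Tr δ out q₁ u₂ w₂ q₂) :
    Tr δ out q (u₁ ++ u₂) (w₁ ++ w₂) q₂ := by
  induction h₁ with
  | nil => simpa
  | term t _ ih => simpa [List.append_assoc] using Tr.term t (ih h₂)
  | nt A p _ ih => exact Tr.nt A p (ih h₂)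

lemma Tr.split {q q₂ : Q} {u₁ u₂ : List (Symbol T N)} {w}
    (h : Tr δ out q (u₁ ++ u₂) w q₂) :
    ∃ w₁ w₂ q₁, w = w₁ ++ w₂ ∧ Tr δ out q u₁ w₁ q₁ ∧ Tr δ out q₁ u₂ w₂ q₂ := by
  induction u₁ generalizing q w with
  | nil => exact ⟨[], w, q, rfl, Tr.nil q, h⟩
  | cons s u₁ ih =>
    cases h with
    | term t h' =>
      obtain ⟨w₁, w₂, q₁, rfl, hw₁, hw₂⟩ := ih h'
      exact ⟨(out q t).map Symbol.terminal ++ w₁, w₂, q₁, by simp [List.append_assoc],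
        Tr.term t hw₁, hw₂⟩
    | nt A p h' =>
      obtain ⟨w₁, w₂, q₁, rfl, hw₁, hw₂⟩ := ih h'
      exact ⟨_ :: w₁, w₂, q₁, rfl, Tr.nt A p hw₁, hw₂⟩

lemma Tr_nil_iff {q q' : Q} {w : List (Symbol T' (Option (Q × N × Q)))} :
    Tr δ out q ([] : List (Symbol T N)) w q' ↔ w = [] ∧ q' = q := by
  constructor
  · intro h; cases h; exact ⟨rfl, rfl⟩
  · rintro ⟨rfl, rfl⟩; exact Tr.nil _

lemma Tr_single_nt_iff {q q' : Q} {A : N} {w} :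
    Tr δ out q [Symbol.nonterminal A] w q' ↔
      w = [Symbol.nonterminal (some (q, A, q'))] := by
  constructor
  · intro h
    cases h with
    | nt A p h' => obtain ⟨rfl, rfl⟩ := Tr_nil_iff.mp h'; rfl
  · rintro rfl
    exact Tr.nt A q' (Tr.nil q')

lemma Tr_map_terminal_iff {q q' : Q} {x : List T} {w} :
    Tr δ out q (x.map Symbol.terminal : List (Symbol T N)) w q' ↔
      w = (outWord δ out q x).map Symbol.terminal ∧ q' = dstar δ q x := by
  induction x generalizing q w with
  | nil => simpa [outWord, dstar] using Tr_nil_iff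
  | cons t ts ih =>
    constructor
    · intro h
      cases h with
      | term t h' =>
        obtain ⟨rfl, rfl⟩ := ih.mp h'
        exact ⟨by simp [outWord, dstar], rfl⟩
    · rintro ⟨rfl, rfl⟩
      simpa [outWord, dstar] using Tr.term t (ih.mpr ⟨rfl, rfl⟩)

lemma Tr.all_terminal {q q' : Q} {u : List (Symbol T N)} {w}
    (h : Tr δ out q u w q') (hw : ∀ s ∈ w, ∃ t, s = Symbol.terminal t) :
    ∃ x : List T, u = x.map Symbol.terminal := by
  induction h with
  | nil => exact ⟨[], rfl⟩
  | term t h' ih =>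
    obtain ⟨x, rfl⟩ := ih fun s hs => hw s (List.mem_append_right _ hs)
    exact ⟨t :: x, rfl⟩
  | nt A p h' ih =>
    obtain ⟨t, ht⟩ := hw _ List.mem_cons_self
    simp at ht

/-- helper: splitting a list of terminals followed by something at a nonterminal. -/
lemma terminal_prefix_split {l : List T'} {w w₁ w₂ : List (Symbol T' (Option (Q × N × Q)))} {X}
    (h : l.map Symbol.terminal ++ w = w₁ ++ Symbol.nonterminal X :: w₂) :
    ∃ w₁', w₁ = l.map Symbol.terminal ++ w₁' ∧ w = w₁' ++ Symbol.nonterminal X :: w₂ := by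
  induction l generalizing w₁ with
  | nil => exact ⟨w₁, by simpa using h⟩
  | cons a l ih =>
    cases w₁ with
    | nil => simp at h
    | cons b w₁ =>
      simp only [List.map_cons, List.cons_append, List.cons.injEq] at h
      obtain ⟨rfl, h⟩ := h
      obtain ⟨w₁', rfl, hw⟩ := ih h
      exact ⟨w₁', by simp, hw⟩

lemma Tr.nt_inv {q q' : Q} {u : List (Symbol T N)} {w}
    (h : Tr δ out q u w q') :
    ∀ w₁ X w₂, w = w₁ ++ Symbol.nonterminal X :: w₂ →
    ∃ u₁ A u₂ q₁ q₂, u = u₁ ++ Symbol.nonterminal A :: u₂ ∧ X = some (q₁, A, q₂) ∧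
      Tr δ out q u₁ w₁ q₁ ∧ Tr δ out q₂ u₂ w₂ q' := by
  induction h with
  | nil => intro w₁ X w₂ h; simp at h
  | @term qq u w qq' t h' ih =>
    intro w₁ X w₂ heq
    obtain ⟨w₁', rfl, hw⟩ := terminal_prefix_split heq
    obtain ⟨u₁, A, u₂, q₁, q₂, rfl, rfl, h₁, h₂⟩ := ih w₁' X w₂ hw
    exact ⟨Symbol.terminal t :: u₁, A, u₂, q₁, q₂, rfl, rfl, Tr.term t h₁, h₂⟩
  | @nt qq u w qq' A p h' ih =>
    intro w₁ X w₂ heq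
    cases w₁ with
    | nil =>
      simp only [List.nil_append, List.cons.injEq] at heq
      obtain ⟨hX, rfl⟩ := heq
      cases hX
      exact ⟨[], A, u, qq, p, rfl, rfl, Tr.nil qq, h'⟩
    | cons y w₁ =>
      simp only [List.cons_append, List.cons.injEq] at heq
      obtain ⟨rfl, heq⟩ := heq
      obtain ⟨u₁, A', u₂, q₁, q₂, rfl, rfl, h₁, h₂⟩ := ih w₁ X w₂ heq
      exact ⟨Symbol.nonterminal A :: u₁, A', u₂, q₁, q₂, rfl, rfl, Tr.nt A p h₁, h₂⟩

/-- All translations of a right-hand side, as a list. -/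
noncomputable def expand (δ : Q → T → Q) (out : Q → T → List T') :
    List (Symbol T N) → Q → List (List (Symbol T' (Option (Q × N × Q))) × Q)
  | [], q => [([], q)]
  | Symbol.terminal t :: rest, q =>
      (expand δ out rest (δ q t)).map fun p => ((out q t).map Symbol.terminal ++ p.1, p.2)
  | Symbol.nonterminal A :: rest, q =>
      (Finset.univ : Finset Q).toList.flatMap fun p =>
        (expand δ out rest p).map fun pr => (Symbol.nonterminal (some (q, A, p)) :: pr.1, pr.2)

lemma mem_expand_iff {q q' : Q} {u : List (Symbol T N)} {w} :
    (w, q') ∈ expand δ out u q ↔ Tr δ out q u w q' := by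
  induction u generalizing q w with
  | nil =>
    simp only [expand, List.mem_singleton, Prod.mk.injEq]
    rw [Tr_nil_iff]
  | cons s rest ih =>
    cases s with
    | terminal t =>
      simp only [expand, List.mem_map]
      constructor
      · rintro ⟨⟨w', qq⟩, hmem, heq⟩
        obtain ⟨rfl, rfl⟩ : (out q t).map Symbol.terminal ++ w' = w ∧ qq = q' := by
          simpa using heq
        exact Tr.term t (ih.mp hmem)
      · intro h
        cases h with
        | term t h' => exact ⟨(_, q'), ih.mpr h', rfl⟩
    | nonterminal A =>
      simp only [expand, List.mem_flatMap, List.mem_map]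
      constructor
      · rintro ⟨p, -, ⟨w', qq⟩, hmem, heq⟩
        obtain ⟨rfl, rfl⟩ : Symbol.nonterminal (some (q, A, p)) :: w' = w ∧ qq = q' := by
          simpa using heq
        exact Tr.nt A p (ih.mp hmem)
      · intro h
        cases h with
        | nt A p h' => exact ⟨p, by simp, (_, q'), ih.mpr h', rfl⟩

namespace Grammar

open Classical in
/-- The grammar for the gsm image of a context-free language. -/
noncomputable def gsmGrammar (g : ContextFreeGrammar.{0} T)
    (δ : Q → T → Q) (out : Q → T → List T') (q₀ : Q) : ContextFreeGrammar T' :=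
  { NT := Option (Q × g.NT × Q)
    initial := none
    rules :=
      ((Finset.univ : Finset Q).toList.map
          (fun qf => (⟨none, [Symbol.nonterminal (some (q₀, g.initial, qf))]⟩ :
            ContextFreeRule T' (Option (Q × g.NT × Q)))) ++
        g.rules.toList.flatMap (fun r =>
          (Finset.univ : Finset Q).toList.flatMap (fun p =>
            (expand δ out r.output p).map
              (fun pr => (⟨some (p, r.input, pr.2), pr.1⟩ :
                ContextFreeRule T' (Option (Q × g.NT × Q))))))).toFinset }

variable {g : ContextFreeGrammar.{0} T} {δ : Q → T → Q} {out : Q → T → List T'} {q₀ : Q}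

lemma mem_gsmGrammar_rules_iff {ρ : ContextFreeRule T' (Option (Q × g.NT × Q))} :
    ρ ∈ (gsmGrammar g δ out q₀).rules ↔
      (∃ qf, ρ = ⟨none, [Symbol.nonterminal (some (q₀, g.initial, qf))]⟩) ∨
      (∃ r ∈ g.rules, ∃ p q' w, Tr δ out p r.output w q' ∧ ρ = ⟨some (p, r.input, q'), w⟩) := by
  classical
  show ρ ∈ (_ ++ _ : List _).toFinset ↔ _
  rw [List.mem_toFinset, List.mem_append]
  constructor
  · intro h
    rcases h with h | h
    · obtain ⟨qf, -, rfl⟩ := List.mem_map.mp h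
      exact Or.inl ⟨qf, rfl⟩
    · obtain ⟨r, hr, h⟩ := List.mem_flatMap.mp h
      obtain ⟨p, -, h⟩ := List.mem_flatMap.mp h
      obtain ⟨⟨w, q'⟩, hmem, rfl⟩ := List.mem_map.mp h
      exact Or.inr ⟨r, Finset.mem_toList.mp hr, p, q', w, mem_expand_iff.mp hmem, rfl⟩
  · intro h
    rcases h with ⟨qf, rfl⟩ | ⟨r, hr, p, q', w, hTr, rfl⟩
    · exact Or.inl (List.mem_map.mpr ⟨qf, by simp, rfl⟩)
    · exact Or.inr (List.mem_flatMap.mpr ⟨r, Finset.mem_toList.mpr hr,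
        List.mem_flatMap.mpr ⟨p, by simp,
          List.mem_map.mpr ⟨(w, q'), mem_expand_iff.mpr hTr, rfl⟩⟩⟩)

open ContextFreeGrammar in
lemma fwd {u : List (Symbol T g.NT)} {x : List T}
    (h : g.Derives u (x.map Symbol.terminal)) (q : Q) :
    ∃ w, Tr δ out q u w (dstar δ q x) ∧
      (gsmGrammar g δ out q₀).Derives w ((outWord δ out q x).map Symbol.terminal) := by
  induction h using Relation.ReflTransGen.head_induction_on with
  | refl =>
    exact ⟨(outWord δ out q x).map Symbol.terminal,
      Tr_map_terminal_iff.mpr ⟨rfl, rfl⟩, Relation.ReflTransGen.refl⟩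
  | head hp _ ih =>
    obtain ⟨wv, hTr, hDer⟩ := ih
    obtain ⟨r, hr, hrw⟩ := hp
    rw [ContextFreeRule.rewrites_iff] at hrw
    obtain ⟨p, s, rfl, rfl⟩ := hrw
    rw [show (p ++ [Symbol.nonterminal r.input] ++ s) = p ++ ([Symbol.nonterminal r.input] ++ s)
      by simp] at *
    rw [show (p ++ r.output ++ s) = p ++ (r.output ++ s) by simp] at hTr
    obtain ⟨w₁, w₂₃, q₁, rfl, hw₁, hw₂₃⟩ := hTr.split
    obtain ⟨w₂, w₃, q₂, rfl, hw₂, hw₃⟩ := hw₂₃.split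
    refine ⟨w₁ ++ ([Symbol.nonterminal (some (q₁, r.input, q₂))] ++ w₃), ?_, ?_⟩
    · exact hw₁.append ((Tr_single_nt_iff.mpr rfl).append hw₃)
    · refine Produces.trans_derives ⟨⟨some (q₁, r.input, q₂), w₂⟩, ?_, ?_⟩ hDer
      · exact mem_gsmGrammar_rules_iff.mpr (Or.inr ⟨r, hr, q₁, q₂, w₂, hw₂, rfl⟩)
      · refine ContextFreeRule.rewrites_iff.mpr ?_
        exact ⟨w₁, w₃, (List.append_assoc _ _ _).symm, (List.append_assoc _ _ _).symm⟩

open ContextFreeGrammar in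
lemma bwd {w' : List (Symbol T' (Option (Q × g.NT × Q)))} {y : List T'}
    (h : (gsmGrammar g δ out q₀).Derives w' (y.map Symbol.terminal)) :
    ∀ q u q', Tr δ out q u w' q' →
      ∃ x, g.Derives u (x.map Symbol.terminal) ∧ y = outWord δ out q x ∧ q' = dstar δ q x := by
  induction h using Relation.ReflTransGen.head_induction_on with
  | refl =>
    intro q u q' hTr
    obtain ⟨x, rfl⟩ := hTr.all_terminal (by
      intro s hs
      obtain ⟨t, -, rfl⟩ := List.mem_map.mp hs
      exact ⟨t, rfl⟩)
    obtain ⟨hy, hq⟩ := Tr_map_terminal_iff.mp hTr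
    refine ⟨x, Relation.ReflTransGen.refl, ?_, hq⟩
    have : Function.Injective (Symbol.terminal : T' → Symbol T' (Option (Q × g.NT × Q))) := by
      intro a b hab; cases hab; rfl
    exact List.map_injective_iff.mpr this hy
  | head hp _ ih =>
    intro q u q' hTr
    obtain ⟨ρ, hρ, hrw⟩ := hp
    replace hrw := ContextFreeRule.rewrites_iff.mp hrw
    obtain ⟨p', s', heq, rfl⟩ := hrw
    rw [show (p' ++ [Symbol.nonterminal ρ.input] ++ s') = p' ++ Symbol.nonterminal ρ.input :: s'
      by simp] at heq
    obtain ⟨u₁, A, u₂, q₁, q₂, rfl, hX, h₁, h₂⟩ := hTr.nt_inv p' ρ.input s' heq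
    rcases mem_gsmGrammar_rules_iff.mp hρ with ⟨qf, rfl⟩ | ⟨r, hr, pp, qq', wo, hTro, rfl⟩
    · simp at hX
    · simp only [ContextFreeRule.mk.injEq] at hX ⊢
      obtain ⟨rfl, rfl, rfl⟩ : pp = q₁ ∧ r.input = A ∧ qq' = q₂ := by
        have := hX
        simp only [Option.some.injEq, Prod.mk.injEq] at this
        tauto
      obtain ⟨x, hDer, hy, hq⟩ := ih q (u₁ ++ (r.output ++ u₂)) q' (by
        rw [List.append_assoc]
        exact h₁.append (hTro.append h₂))
      refine ⟨x, ?_, hy, hq⟩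
      refine Produces.trans_derives ⟨r, hr, ?_⟩ hDer
      rw [ContextFreeRule.rewrites_iff]
      exact ⟨u₁, u₂, by simp, by simp⟩

open ContextFreeGrammar in
theorem gsmGrammar_language (g : ContextFreeGrammar.{0} T)
    (δ : Q → T → Q) (out : Q → T → List T') (q₀ : Q) :
    (gsmGrammar g δ out q₀).language = (outWord δ out q₀) '' g.language := by
  ext y
  constructor
  · intro hy
    rw [mem_language_iff] at hy
    rcases hy.eq_or_head with heq | ⟨v', hp, hDer⟩
    · exfalso
      cases hy' : y with
      | nil => rw [hy'] at heq; simp [gsmGrammar] at heq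
      | cons a l => rw [hy'] at heq; simp [gsmGrammar] at heq
    · obtain ⟨ρ, hρ, hrw⟩ := hp
      rw [ContextFreeRule.rewrites_iff] at hrw
      obtain ⟨p, s, heq, rfl⟩ := hrw
      have hps : p = [] ∧ s = [] ∧ Symbol.nonterminal ρ.input =
          (Symbol.nonterminal (gsmGrammar g δ out q₀).initial :
            Symbol T' (Option (Q × g.NT × Q))) := by
        have hlen := congrArg List.length heq
        simp at hlen
        have hp0 : p = [] := List.eq_nil_of_length_eq_zero (by omega)
        have hs0 : s = [] := List.eq_nil_of_length_eq_zero (by omega)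
        refine ⟨hp0, hs0, ?_⟩
        rw [hp0, hs0] at heq
        exact congrArg _ (by simpa using heq.symm)
      obtain ⟨rfl, rfl, hinit⟩ := hps
      have hρin : ρ.input = none := by
        simpa [gsmGrammar] using hinit
      rcases mem_gsmGrammar_rules_iff.mp hρ with ⟨qf, rfl⟩ | ⟨r, hr, p, q', w, hTr, rfl⟩
      · simp only [List.nil_append, List.append_nil] at hDer
        obtain ⟨x, hDerx, hy, hq⟩ := bwd hDer q₀ [Symbol.nonterminal g.initial] qf
          (Tr_single_nt_iff.mpr rfl)
        exact ⟨x, hDerx, hy.symm⟩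
      · simp at hρin
  · rintro ⟨x, hx, rfl⟩
    refine (mem_language_iff _ _).mpr ?_
    replace hx := (mem_language_iff g x).mp hx
    obtain ⟨w, hTr, hDer⟩ := fwd (q₀ := q₀) hx q₀
    rw [Tr_single_nt_iff] at hTr
    subst hTr
    refine Produces.trans_derives ⟨⟨none, [Symbol.nonterminal (some (q₀, g.initial, dstar δ q₀ x))]⟩,
      mem_gsmGrammar_rules_iff.mpr (Or.inl ⟨_, rfl⟩), ?_⟩ hDer
    exact ContextFreeRule.Rewrites.head []

end Grammar

/-- A context-free language is closed under deterministic gsm mappings. -/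
theorem isContextFree_gsm_image {L : Language T} (hL : L.IsContextFree)
    (δ : Q → T → Q) (out : Q → T → List T') (q₀ : Q) :
    Language.IsContextFree ((outWord δ out q₀) '' L : Language T') := by
  obtain ⟨g, rfl⟩ := hL
  exact ⟨Grammar.gsmGrammar g δ out q₀, Grammar.gsmGrammar_language g δ out q₀⟩

end GSM


namespace RegCl

open Classical

set_option linter.unusedSectionVars false

variable {γ : Type} {σ : Type} [Fintype σ]

/-- DFA accepting `{ #w# | w ∈ accepts Md }` (letters of `w` wrapped in `some`,
`#` being `none`). -/
noncomputable def decorDFA (Md : DFA γ σ) : DFA (Option γ) (Option σ ⊕ Bool) where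
  step := fun q a =>
    match q, a with
    | Sum.inr false, none => Sum.inl (some Md.start)
    | Sum.inr false, some _ => Sum.inl none
    | Sum.inl (some s), some a => Sum.inl (some (Md.step s a))
    | Sum.inl (some s), none => if s ∈ Md.accept then Sum.inr true else Sum.inl none
    | Sum.inl none, _ => Sum.inl none
    | Sum.inr true, _ => Sum.inl none
  start := Sum.inr false
  accept := {Sum.inr true}

variable (Md : DFA γ σ)

lemma decorDFA_dead (x : List (Option γ)) :
    (decorDFA Md).evalFrom (Sum.inl none) x = Sum.inl none := by
  induction x with
  | nil => rfl
  | cons a x ih => cases a <;> simpa [DFA.evalFrom, decorDFA] using ih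

lemma decorDFA_mid (w : List γ) (s : σ) :
    (decorDFA Md).evalFrom (Sum.inl (some s)) (w.map some) = Sum.inl (some (Md.evalFrom s w)) := by
  induction w generalizing s with
  | nil => rfl
  | cons a w ih => simpa [DFA.evalFrom, decorDFA] using ih (Md.step s a)

lemma decorDFA_mid_inv (x : List (Option γ)) (s : σ)
    (h : (decorDFA Md).evalFrom (Sum.inl (some s)) x = Sum.inr true) :
    ∃ w, x = w.map some ++ [none] ∧ Md.evalFrom s w ∈ Md.accept := by
  induction x generalizing s with
  | nil => simp [DFA.evalFrom] at h
  | cons a x ih =>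
    cases a with
    | some a' =>
      have h' : (decorDFA Md).evalFrom (Sum.inl (some (Md.step s a'))) x = Sum.inr true := h
      obtain ⟨w, rfl, hw⟩ := ih (Md.step s a') h'
      exact ⟨a' :: w, by simp, hw⟩
    | none =>
      by_cases hs : s ∈ Md.accept
      · have h' : (decorDFA Md).evalFrom (Sum.inr true) x = Sum.inr true := by
          simpa [DFA.evalFrom, decorDFA, hs] using h
        cases x with
        | nil => exact ⟨[], by simp, hs⟩
        | cons b x' =>
          exfalso
          have : (decorDFA Md).evalFrom (Sum.inl none) x' = Sum.inr true := by
            cases b <;> simpa [DFA.evalFrom, decorDFA] using h'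
          simp [decorDFA_dead] at this
      · exfalso
        have h' : (decorDFA Md).evalFrom (Sum.inl none) x = Sum.inr true := by
          simpa [DFA.evalFrom, decorDFA, hs] using h
        simp [decorDFA_dead] at h'

theorem decorDFA_accepts :
    (decorDFA Md).accepts = (fun w => (none : Option γ) :: w.map some ++ [none]) '' Md.accepts := by
  ext x
  rw [DFA.mem_accepts]
  constructor
  · intro h
    have h' : (decorDFA Md).evalFrom (Sum.inr false) x = Sum.inr true := by
      simpa [decorDFA, DFA.eval] using h
    cases x with
    | nil => simp [DFA.evalFrom] at h'
    | cons a x' =>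
      cases a with
      | some a' =>
        exfalso
        have : (decorDFA Md).evalFrom (Sum.inl none) x' = Sum.inr true := h'
        simp [decorDFA_dead] at this
      | none =>
        have : (decorDFA Md).evalFrom (Sum.inl (some Md.start)) x' = Sum.inr true := h'
        obtain ⟨w, rfl, hw⟩ := decorDFA_mid_inv Md x' Md.start this
        exact ⟨w, hw, rfl⟩
  · rintro ⟨w, hw, rfl⟩
    replace hw := (DFA.mem_accepts (M := Md)).mp hw
    show (decorDFA Md).evalFrom (Sum.inr false) _ ∈ ({Sum.inr true} : Set (Option σ ⊕ Bool))
    rw [Set.mem_singleton_iff]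
    have h0 : (decorDFA Md).evalFrom (Sum.inr false) ((none : Option γ) :: w.map some ++ [none]) =
        (decorDFA Md).evalFrom (Sum.inl (some Md.start)) (w.map some ++ [none]) := rfl
    rw [h0, DFA.evalFrom_of_append, decorDFA_mid]
    simp only [DFA.evalFrom_singleton]
    show (if Md.evalFrom Md.start w ∈ Md.accept then Sum.inr true else Sum.inl none) = _
    rw [if_pos (show Md.evalFrom Md.start w ∈ Md.accept from hw)]

theorem decorate_isRegular {L : Language γ} (hL : L.IsRegular) :
    Language.IsRegular ((fun w => (none : Option γ) :: w.map some ++ [none]) '' L) := by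
  obtain ⟨σ', _, Md, rfl⟩ := hL
  exact ⟨Option σ' ⊕ Bool, inferInstance, decorDFA Md, decorDFA_accepts Md⟩

end RegCl

namespace RegBind

section Bind

variable {β α : Type} [Fintype β] (Md : DFA β σ) (φ : β → List α)

set_option linter.unusedSectionVars false

/-- One ε-like move: consume a generator whose `φ`-image is empty. -/
def ECstep (s s' : σ) : Prop := ∃ b, φ b = [] ∧ s' = Md.step s b

/-- Reachability via empty chunks. -/
def EC : σ → σ → Prop := Relation.ReflTransGen (ECstep Md φ)

/-- Reachability: `Reach s x s'` iff some word `w` with `w.flatMap φ = x` drives `Md`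
from `s` to `s'`. -/
inductive Reach : σ → List α → σ → Prop
  | refl (s) : Reach s [] s
  | eps {s x s'} (b) : φ b = [] → Reach (Md.step s b) x s' → Reach s x s'
  | chunk {s x s'} (b) : φ b ≠ [] → Reach (Md.step s b) x s' → Reach s (φ b ++ x) s'

lemma reach_iff {s s' : σ} {x : List α} :
    Reach Md φ s x s' ↔ ∃ w, x = w.flatMap φ ∧ Md.evalFrom s w = s' := by
  constructor
  · intro h
    induction h with
    | refl s => exact ⟨[], rfl, rfl⟩
    | eps b hb _ ih =>
      obtain ⟨w, rfl, rfl⟩ := ih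
      exact ⟨b :: w, by simp [hb], rfl⟩
    | chunk b hb _ ih =>
      obtain ⟨w, rfl, rfl⟩ := ih
      exact ⟨b :: w, by simp, rfl⟩
  · rintro ⟨w, rfl, rfl⟩
    induction w generalizing s with
    | nil => exact Reach.refl s
    | cons b w ih =>
      by_cases hb : φ b = []
      · simpa [hb] using Reach.eps b hb ih
      · simpa using Reach.chunk b hb ih

/-- Strict reachability: empty-chunk moves happen only right before a nonempty chunk. -/
inductive RS : σ → List α → σ → Prop
  | refl (s) : RS s [] s
  | chunk {s x s'} (s₁ b) : EC Md φ s s₁ → φ b ≠ [] → RS (Md.step s₁ b) x s' → RS s (φ b ++ x) s'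

lemma RS_inv {s t : σ} {x : List α} (h : RS Md φ s x t) :
    (x = [] ∧ t = s) ∨
      ∃ s₁ b x', EC Md φ s s₁ ∧ φ b ≠ [] ∧ x = φ b ++ x' ∧ RS Md φ (Md.step s₁ b) x' t := by
  cases h with
  | refl => exact Or.inl ⟨rfl, rfl⟩
  | chunk s₁ b hEC hb h' => exact Or.inr ⟨s₁, b, _, hEC, hb, rfl, h'⟩

lemma RS_nil_iff {s t : σ} : RS Md φ s [] t ↔ t = s := by
  constructor
  · intro h
    rcases RS_inv Md φ h with ⟨-, rfl⟩ | ⟨s₁, b, x', -, hb, hx, -⟩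
    · rfl
    · exact absurd (List.append_eq_nil_iff.mp hx.symm).1 hb
  · rintro rfl; exact RS.refl _

lemma EC_reach {s t : σ} (h : EC Md φ s t) {x : List α} {s' : σ}
    (hr : Reach Md φ t x s') : Reach Md φ s x s' := by
  induction h using Relation.ReflTransGen.head_induction_on with
  | refl => exact hr
  | head h _ ih => obtain ⟨b, hb, rfl⟩ := h; exact Reach.eps b hb ih

lemma RS.trans' {s t u : σ} {x y : List α} (h₁ : RS Md φ s x t) (h₂ : RS Md φ t y u) :
    RS Md φ s (x ++ y) u := by
  induction h₁ with
  | refl => simpa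
  | chunk s₁ b hEC hb _ ih => simpa [List.append_assoc] using RS.chunk s₁ b hEC hb (ih h₂)

lemma RS_EC_iff {s s' : σ} {x : List α} :
    (∃ t, RS Md φ s x t ∧ EC Md φ t s') ↔ Reach Md φ s x s' := by
  constructor
  · rintro ⟨t, hRS, hEC⟩
    induction hRS with
    | refl s => exact EC_reach Md φ hEC (Reach.refl _)
    | chunk s₁ b hEC₁ hb _ ih =>
      exact EC_reach Md φ hEC₁ (Reach.chunk b hb (ih hEC))
  · intro h
    induction h with
    | refl s => exact ⟨s, RS.refl s, Relation.ReflTransGen.refl⟩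
    | eps b hb _ ih =>
      obtain ⟨t, hRS, hEC⟩ := ih
      cases hRS with
      | refl =>
        exact ⟨_, RS.refl _, Relation.ReflTransGen.head ⟨b, hb, rfl⟩ hEC⟩
      | chunk s₁ b' hEC₁ hb' h' =>
        exact ⟨t, RS.chunk s₁ b' (Relation.ReflTransGen.head ⟨b, hb, rfl⟩ hEC₁) hb' h', hEC⟩
    | chunk b hb _ ih =>
      obtain ⟨t, hRS, hEC⟩ := ih
      exact ⟨t, RS.chunk _ b Relation.ReflTransGen.refl hb hRS, hEC⟩

/-- Last-chunk decomposition of strict reachability. -/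
lemma RS_last_chunk {s t : σ} {y : List α} (h : RS Md φ s y t) (hy : y ≠ []) :
    ∃ z s₀ s₁ b, y = z ++ φ b ∧ φ b ≠ [] ∧ RS Md φ s z s₀ ∧ EC Md φ s₀ s₁ ∧
      t = Md.step s₁ b := by
  induction h with
  | refl s => exact absurd rfl hy
  | @chunk s x t s₁ b hEC hb h' ih =>
    rcases eq_or_ne x [] with rfl | hx
    · rw [RS_nil_iff] at h'
      exact ⟨[], s, s₁, b, by simp, hb, RS.refl s, hEC, h'⟩
    · obtain ⟨z', s₀', s₁', b', rfl, hb', hRS', hEC', rfl⟩ := ih hx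
      exact ⟨φ b ++ z', s₀', s₁', b', by simp, hb', RS.chunk s₁ b hEC hb hRS', hEC', rfl⟩

end Bind

section BindNFA

variable {β α : Type} [Fintype β] (Md : DFA β σ) (φ : β → List α)

/-- Bound on chunk lengths. -/
def maxLen : ℕ := Finset.univ.sup fun b : β => (φ b).length

lemma length_le_maxLen (b : β) : (φ b).length ≤ maxLen φ :=
  Finset.le_sup (f := fun b : β => (φ b).length) (Finset.mem_univ b)

/-- NFA accepting the image of `Md.accepts` under `w ↦ w.flatMap φ`. -/
def bindNFA : NFA α (σ ⊕ (σ × β × Fin (maxLen φ + 1))) where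
  step := fun q a =>
    match q with
    | Sum.inl t =>
        { q' | ∃ s₁, EC Md φ t s₁ ∧ ∃ b, (φ b).head? = some a ∧
            (((φ b).length = 1 ∧ q' = Sum.inl (Md.step s₁ b)) ∨
             (∃ _ : 1 < (φ b).length, q' = Sum.inr (s₁, b,
               ⟨1, by have := length_le_maxLen φ b; omega⟩))) }
    | Sum.inr (s₁, b, j) =>
        { q' | (φ b)[j.1]? = some a ∧
            ((j.1 + 1 = (φ b).length ∧ q' = Sum.inl (Md.step s₁ b)) ∨
             (∃ _ : j.1 + 1 < (φ b).length, q' = Sum.inr (s₁, b,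
               ⟨j.1 + 1, by have := length_le_maxLen φ b; omega⟩))) }
  start := {Sum.inl Md.start}
  accept := { q | ∃ t, q = Sum.inl t ∧ ∃ t', EC Md φ t t' ∧ t' ∈ Md.accept }

/-- Intended meaning of the states after reading `x`. -/
def Sem (x : List α) : Set (σ ⊕ (σ × β × Fin (maxLen φ + 1))) :=
  fun q => match q with
  | Sum.inl t => RS Md φ Md.start x t
  | Sum.inr (s₁, b, j) => 0 < j.1 ∧ j.1 < (φ b).length ∧
      ∃ x₀ s, x = x₀ ++ (φ b).take j.1 ∧ RS Md φ Md.start x₀ s ∧ EC Md φ s s₁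

theorem bindNFA_evalFrom (x : List α) :
    (bindNFA Md φ).evalFrom {Sum.inl Md.start} x = Sem Md φ x := by
  induction x using List.reverseRecOn with
  | nil =>
    ext q
    show q ∈ ({Sum.inl Md.start} : Set _) ↔ _
    cases q with
    | inl t =>
      simp only [Set.mem_singleton_iff, Sum.inl.injEq]
      have hiff : (Sum.inl t ∈ Sem Md φ []) ↔ RS Md φ Md.start [] t := Iff.rfl
      rw [hiff, RS_nil_iff]
    | inr p =>
      obtain ⟨s₁, b, j⟩ := p
      simp only [Set.mem_singleton_iff, Sem]
      constructor
      · intro h; simp at h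
      · rintro ⟨hj0, hjlen, x₀, s, hx, -⟩
        exfalso
        have : ((φ b).take j.1).length = j.1 := by
          rw [List.length_take]; omega
        have hlen := congrArg List.length hx
        simp [this] at hlen
        omega
  | append_singleton x a ih =>
    rw [NFA.evalFrom_append, NFA.evalFrom_singleton, ih]
    ext q
    rw [NFA.mem_stepSet]
    constructor
    · rintro ⟨p, hp, hq⟩
      cases p with
      | inl t =>
        obtain ⟨s₁, hEC, b, hhead, hcase⟩ := hq
        obtain ⟨ys, hys⟩ := List.head?_eq_some_iff.mp hhead
        have hbne : φ b ≠ [] := by simp [hys]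
        have hpt : RS Md φ Md.start x t := hp
        rcases hcase with ⟨hlen1, rfl⟩ | ⟨hlen1, rfl⟩
        · have hb : φ b = [a] := by
            rw [hys] at hlen1 ⊢
            simp at hlen1
            simp [hlen1]
          show RS Md φ Md.start (x ++ [a]) (Md.step s₁ b)
          have := hpt.trans' Md φ (RS.chunk s₁ b hEC hbne (RS.refl _))
          simpa [hb] using this
        · refine ⟨by simp only [Fin.val_mk]; omega, by simp only [Fin.val_mk]; omega,
            x, t, ?_, hpt, hEC⟩
          simp only [Fin.val_mk]
          have h1 : (φ b).take 1 = [a] := by rw [hys]; simp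
          rw [h1]
      | inr p =>
        obtain ⟨s₁, b, j⟩ := p
        obtain ⟨hj0, hjlen, x₀, s, hx, hRS, hEC⟩ := hp
        obtain ⟨hget, hcase⟩ := hq
        have hbne : φ b ≠ [] := by
          intro h; rw [h] at hjlen; simp at hjlen
        have htake : (φ b).take (j.1 + 1) = (φ b).take j.1 ++ [a] := by
          rw [List.take_succ, hget]; rfl
        rcases hcase with ⟨hlen1, rfl⟩ | ⟨hlt, rfl⟩
        · show RS Md φ Md.start (x ++ [a]) (Md.step s₁ b)
          have hfull : (φ b).take (j.1 + 1) = φ b := by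
            rw [hlen1]; simp
          have hres := hRS.trans' Md φ (RS.chunk s₁ b hEC hbne (RS.refl _))
          have hxa : x ++ [a] = x₀ ++ (φ b ++ []) := by
            rw [List.append_nil, hx, List.append_assoc, ← htake, hfull]
          rw [hxa]
          exact hres
        · refine ⟨by simp only [Fin.val_mk]; omega, by simp only [Fin.val_mk]; omega,
            x₀, s, ?_, hRS, hEC⟩
          simp only [Fin.val_mk]
          rw [hx, htake]
          simp
    · intro hq
      cases q with
      | inl t =>
        have h : RS Md φ Md.start (x ++ [a]) t := hq
        obtain ⟨z, s₀, s₁, b, hdec, hbne, hRS, hEC, rfl⟩ :=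
          RS_last_chunk Md φ h (by simp)
        have hsplit := List.dropLast_append_getLast hbne
        have heq : x ++ [a] = (z ++ (φ b).dropLast) ++ [(φ b).getLast hbne] := by
          rw [List.append_assoc, hsplit, hdec]
        obtain ⟨hx, ha⟩ := List.append_inj' heq (by simp)
        have ha' : a = (φ b).getLast hbne := by simpa using ha
        by_cases hlen1 : (φ b).length = 1
        · have hdl : (φ b).dropLast = [] := by
            rw [List.dropLast_eq_take, hlen1]; simp
          refine ⟨Sum.inl s₀, ?_, ?_⟩
          · show RS Md φ Md.start x s₀
            rw [hx, hdl, List.append_nil]; exact hRS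
          · refine ⟨s₁, hEC, b, ?_, Or.inl ⟨hlen1, rfl⟩⟩
            have hb1 : φ b = [a] := by
              rw [← hsplit, hdl, ← ha']
              simp
            simp [hb1]
        · have hlen2 : 1 < (φ b).length := by
            have : 0 < (φ b).length := List.length_pos_iff.mpr hbne
            omega
          refine ⟨Sum.inr (s₁, b, ⟨(φ b).length - 1,
            by have := length_le_maxLen φ b; omega⟩), ?_, ?_⟩
          · refine ⟨by simp only [Fin.val_mk]; omega, by simp only [Fin.val_mk]; omega,
              z, s₀, ?_, hRS, hEC⟩
            simp only [Fin.val_mk]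
            rw [hx, List.dropLast_eq_take]
          · refine ⟨?_, Or.inl ⟨by simp only [Fin.val_mk]; omega, rfl⟩⟩
            simp only [Fin.val_mk]
            rw [List.getElem?_eq_some_iff]
            exact ⟨by omega, by rw [ha', List.getLast_eq_getElem hbne]⟩
      | inr p =>
        obtain ⟨s₁, b, j⟩ := p
        obtain ⟨hj0, hjlen, x₀, s, hx, hRS, hEC⟩ := hq
        have hj1 : j.1 - 1 + 1 = j.1 := by omega
        have hgetlt : j.1 - 1 < (φ b).length := by omega
        have htake : (φ b).take j.1 = (φ b).take (j.1 - 1) ++ [(φ b)[j.1 - 1]] := by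
          conv_lhs => rw [← hj1]
          rw [List.take_succ]
          congr 1
          rw [List.getElem?_eq_getElem hgetlt]
          rfl
        have heq : x ++ [a] = (x₀ ++ (φ b).take (j.1 - 1)) ++ [(φ b)[j.1 - 1]] := by
          rw [hx, htake, List.append_assoc]
        obtain ⟨hx', ha⟩ := List.append_inj' heq (by simp)
        have ha' : a = (φ b)[j.1 - 1] := by simpa using ha
        by_cases hj1' : j.1 = 1
        · refine ⟨Sum.inl s, ?_, ?_⟩
          · show RS Md φ Md.start x s
            rw [hx']
            simpa [hj1'] using hRS
          · refine ⟨s₁, hEC, b, ?_, Or.inr ⟨by omega, ?_⟩⟩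
            · rw [List.head?_eq_getElem?, List.getElem?_eq_some_iff]
              exact ⟨by omega, by rw [ha']; congr 1; omega⟩
            · obtain ⟨jv, hjv⟩ := j
              have hjv1 : jv = 1 := hj1'
              subst hjv1
              simp only [Sum.inr.injEq, Prod.mk.injEq, Fin.mk.injEq]
        · refine ⟨Sum.inr (s₁, b, ⟨j.1 - 1, by omega⟩), ?_, ?_⟩
          · refine ⟨by simp only [Fin.val_mk]; omega, by simp only [Fin.val_mk]; omega,
              x₀, s, ?_, hRS, hEC⟩
            simp only [Fin.val_mk]
            exact hx'
          · refine ⟨?_, Or.inr ⟨by simp only [Fin.val_mk]; omega, ?_⟩⟩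
            · simp only [Fin.val_mk]
              rw [List.getElem?_eq_some_iff]
              exact ⟨hgetlt, ha'.symm⟩
            · obtain ⟨jv, hjv⟩ := j
              have hj0' : 0 < jv := hj0
              simp only [Sum.inr.injEq, Prod.mk.injEq, Fin.mk.injEq, Fin.val_mk]
              exact ⟨trivial, trivial, by omega⟩

theorem bindNFA_accepts :
    (bindNFA Md φ).accepts = (fun w => w.flatMap φ) '' Md.accepts := by
  ext x
  rw [NFA.mem_accepts]
  constructor
  · rintro ⟨q, hacc, hmem⟩
    obtain ⟨t, rfl, t', hEC, hacc'⟩ := hacc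
    rw [show (bindNFA Md φ).start = {Sum.inl Md.start} from rfl, bindNFA_evalFrom] at hmem
    have hRS : RS Md φ Md.start x t := hmem
    have hreach : Reach Md φ Md.start x t' := (RS_EC_iff Md φ).mp ⟨t, hRS, hEC⟩
    obtain ⟨w, rfl, hev⟩ := (reach_iff Md φ).mp hreach
    refine ⟨w, ?_, rfl⟩
    refine (DFA.mem_accepts (M := Md)).mpr ?_
    show Md.evalFrom Md.start w ∈ Md.accept
    rw [hev]; exact hacc'
  · rintro ⟨w, hw, rfl⟩
    have hreach : Reach Md φ Md.start (w.flatMap φ) (Md.evalFrom Md.start w) :=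
      (reach_iff Md φ).mpr ⟨w, rfl, rfl⟩
    obtain ⟨t, hRS, hEC⟩ := (RS_EC_iff Md φ).mpr hreach
    refine ⟨Sum.inl t, ⟨t, rfl, Md.evalFrom Md.start w, hEC, ?_⟩, ?_⟩
    · exact (DFA.mem_accepts (M := Md)).mp hw
    · rw [show (bindNFA Md φ).start = {Sum.inl Md.start} from rfl, bindNFA_evalFrom]
      exact hRS

end BindNFA

theorem bind_image_isRegular {β α : Type} [Fintype β] {L : Language β}
    (hL : L.IsRegular) (φ : β → List α) :
    Language.IsRegular ((fun w => w.flatMap φ) '' L) := by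
  obtain ⟨σ', _, Md, rfl⟩ := hL
  refine ⟨Set (σ' ⊕ (σ' × β × Fin (maxLen φ + 1))), Set.fintype, (bindNFA Md φ).toDFA, ?_⟩
  rw [NFA.toDFA_correct, bindNFA_accepts]

end RegBind



/-- Evaluation of a nonempty word in a semigroup via a map on letters;
the empty word evaluates to `none`. -/
def evalS {α S : Type*} [Semigroup S] (f : α → S) : List α → Option S
  | [] => none
  | a :: as => some (as.foldl (fun s b => s * f b) (f a))

/-- `f : α → S` determines a choice of generators `α⁺ → S`, i.e. the induced
semigroup homomorphism from the free semigroup on `α` is surjective. -/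
def IsChoice {α S : Type*} [Semigroup S] (f : α → S) : Prop :=
  ∀ s : S, ∃ w : List α, evalS f w = some s

/-- The encoding of `u#v#wʳ` as a word over `Option α`, with `none` playing the
role of the fresh symbol `#`. -/
def hashWord {α : Type*} (u v w : List α) : List (Option α) :=
  u.map some ++ none :: v.map some ++ none :: w.reverse.map some

/-- The multiplication table of the language `R` with respect to `f`:
all words `u#v#wʳ` with `u,v,w ∈ R` and `ū·v̄ = w̄`. -/
def mulTable {α S : Type*} [Semigroup S] (f : α → S) (R : Language α) :
    Language (Option α) :=
  { x | ∃ u v w, u ∈ R ∧ v ∈ R ∧ w ∈ R ∧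
      (∃ su sv, evalS f u = some su ∧ evalS f v = some sv ∧
        evalS f w = some (su * sv)) ∧ x = hashWord u v w }

/-- `R` is a combing for `S` with respect to `f`: a set of nonempty words
representing every element of `S`. -/
def IsCombing {α S : Type*} [Semigroup S] (f : α → S) (R : Language α) : Prop :=
  ([] : List α) ∉ R ∧ ∀ s : S, ∃ w ∈ R, evalS f w = some s

/-- A semigroup is word hyperbolic if for some choice of generators there is a
regular combing whose multiplication table is context-free. -/
def WordHyperbolic (S : Type*) [Semigroup S] : Prop :=
  ∃ (α : Type) (_ : Fintype α) (f : α → S), IsChoice f ∧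
    ∃ R : Language α, R.IsRegular ∧ IsCombing f R ∧ (mulTable f R).IsContextFree

/-- Evaluation of a word in a monoid via a map on letters (the induced monoid
homomorphism from the free monoid on `α`). -/
def evalM {α M : Type*} [Monoid M] (f : α → M) (w : List α) : M :=
  (w.map f).prod

/-- The monoid multiplication table of `R ⊆ Σ*` with respect to `f`:
all words `u#v#wʳ` with `u,v,w ∈ R` and `ū·v̄ = w̄`. -/
def mulTableM {α M : Type*} [Monoid M] (f : α → M) (R : Language α) :
    Language (Option α) :=
  { x | ∃ u v w, u ∈ R ∧ v ∈ R ∧ w ∈ R ∧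
      evalM f u * evalM f v = evalM f w ∧ x = hashWord u v w }


section EvalLemmas

variable {α β M : Type*} [Monoid M]

lemma foldl_mul_eval (f : α → M) (c : M) (l : List α) :
    l.foldl (fun s b => s * f b) c = c * evalM f l := by
  induction l generalizing c with
  | nil => simp [evalM]
  | cons b l ih => simp [evalM, ih, mul_assoc]

lemma evalS_eq_evalM (f : α → M) {w : List α} (hw : w ≠ []) :
    evalS f w = some (evalM f w) := by
  cases w with
  | nil => exact absurd rfl hw
  | cons a as => simp [evalS, foldl_mul_eval, evalM, mul_assoc]

lemma evalS_ne_nil {f : α → M} {w : List α} {s : M} (h : evalS f w = some s) : w ≠ [] := by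
  cases w <;> simp [evalS] at h ⊢

lemma evalM_append (f : α → M) (x y : List α) :
    evalM f (x ++ y) = evalM f x * evalM f y := by simp [evalM]

lemma evalM_flatMap (f : α → M) (φ : β → List α) (w : List β) :
    evalM f (w.flatMap φ) = evalM (fun b => evalM f (φ b)) w := by
  induction w with
  | nil => simp [evalM]
  | cons b w ih =>
    rw [List.flatMap_cons, evalM_append, ih]
    simp [evalM]

end EvalLemmas


section MprAux

variable {M : Type*} [Monoid M] {α : Type}

/-- Extension of a letter map to `Option α`, sending the new letter to `1`. -/
def fOpt (f : α → M) : Option α → M := fun o => o.elim 1 f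

/-- Decoration of a word: `w ↦ #w#` with letters wrapped in `some`. -/
def dec (w : List α) : List (Option α) := none :: w.map some ++ [none]

lemma evalM_map_some (f : α → M) (w : List α) :
    evalM (fOpt f) (w.map some) = evalM f w := by
  simp only [evalM, List.map_map]
  rfl

lemma evalM_dec (f : α → M) (w : List α) : evalM (fOpt f) (dec w) = evalM f w := by
  have h1 : evalM (fOpt f) [(none : Option α)] = 1 := by simp [evalM, fOpt]
  have : dec w = [(none : Option α)] ++ w.map some ++ [none] := by simp [dec]
  rw [this, evalM_append, evalM_append, h1, evalM_map_some, one_mul, mul_one]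

lemma dec_ne_nil (w : List α) : dec w ≠ [] := by simp [dec]

lemma evalS_dec (f : α → M) (w : List α) :
    evalS (fOpt f) (dec w) = some (evalM f w) := by
  rw [evalS_eq_evalM _ (dec_ne_nil w), evalM_dec]

/-- The letter substitution used in the first gsm. -/
def hh : Option α → List (Option (Option α))
  | some a => [some (some a)]
  | none => [some none, none, some none]

def δB : Bool → Option α → Bool := fun _ _ => true
def out1 : Bool → Option α → List (Option (Option α)) :=
  fun q t => if q then hh t else some none :: hh t
def δB2 : Bool → Option (Option α) → Bool := fun _ _ => true
def out2 : Bool → Option (Option α) → List (Option (Option α)) :=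
  fun q t => if q then [t] else [some none, t]

lemma outWord1_true (x : List (Option α)) :
    GSM.outWord δB out1 true x = x.flatMap hh := by
  induction x with
  | nil => rfl
  | cons t ts ih => simp [GSM.outWord, out1, δB, ih]

lemma outWord1_false {x : List (Option α)} (hx : x ≠ []) :
    GSM.outWord δB out1 false x = some none :: x.flatMap hh := by
  cases x with
  | nil => exact absurd rfl hx
  | cons t ts => simp [GSM.outWord, out1, δB, outWord1_true]

lemma outWord2_true (x : List (Option (Option α))) :
    GSM.outWord δB2 out2 true x = x := by
  induction x with
  | nil => rfl
  | cons t ts ih => simp [GSM.outWord, out2, δB2, ih]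

lemma outWord2_false {x : List (Option (Option α))} (hx : x ≠ []) :
    GSM.outWord δB2 out2 false x = some none :: x := by
  cases x with
  | nil => exact absurd rfl hx
  | cons t ts => simp [GSM.outWord, out2, δB2, outWord2_true]

lemma flatMap_hh_map_some (l : List α) :
    (l.map some).flatMap hh = l.map (fun a => some (some a)) := by
  induction l with
  | nil => rfl
  | cons a l ih => simp [hh, ih]

lemma hash_dec (u v w : List α) :
    hashWord (dec u) (dec v) (dec w) =
      some none :: (hashWord u v w).flatMap hh ++ [some none] := by
  have hrev : (List.map some w).reverse.flatMap hh =
      (List.map (fun a => some (some a)) w).reverse := by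
    rw [← List.map_reverse, flatMap_hh_map_some, List.map_reverse]
  simp [hashWord, dec, List.flatMap_append, flatMap_hh_map_some, hh, List.map_map,
    List.reverse_append, hrev, Function.comp_def]

lemma hashWord_ne_nil (u v w : List α) : hashWord u v w ≠ [] := by
  simp only [hashWord]
  intro h
  have := congrArg List.length h
  simp at this

lemma F_comp {x : List (Option α)} (hx : x ≠ []) :
    (GSM.outWord δB2 out2 false ((GSM.outWord δB out1 false x).reverse)).reverse
      = some none :: x.flatMap hh ++ [some none] := by
  rw [outWord1_false hx]
  rw [outWord2_false (by simp)]
  simp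

end MprAux


section MpAux

variable {α β : Type}

/-- 3-state counter of `#`-symbols seen. -/
def δ3 : Fin 3 → Option β → Fin 3 := fun q t =>
  match t with
  | none => if q.1 = 0 then 1 else 2
  | some _ => q

/-- Output function: expand generators via `φ`, reversed in the third region. -/
def out3 (φ : β → List α) : Fin 3 → Option β → List (Option α) := fun q t =>
  match t with
  | none => [none]
  | some b => if q.1 = 2 then ((φ b).reverse).map some else (φ b).map some

lemma dstar3_map_some (q : Fin 3) (u : List β) :
    GSM.dstar δ3 q (u.map some) = q := by
  induction u with
  | nil => rfl
  | cons b u ih => simpa [GSM.dstar, δ3] using ih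

lemma outWord3_map_some_ne2 (φ : β → List α) {q : Fin 3} (hq : q.1 ≠ 2) (u : List β) :
    GSM.outWord δ3 (out3 φ) q (u.map some) = (u.flatMap φ).map some := by
  induction u with
  | nil => rfl
  | cons b u ih => simp [GSM.outWord, out3, δ3, hq, ih]

lemma outWord3_map_some_2 (φ : β → List α) (u : List β) :
    GSM.outWord δ3 (out3 φ) 2 (u.map some) =
      (u.flatMap (fun b => (φ b).reverse)).map some := by
  induction u with
  | nil => rfl
  | cons b u ih =>
    simp only [List.map_cons, GSM.outWord, ih]
    have : δ3 (2 : Fin 3) (some b) = 2 := rfl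
    rw [this]
    simp [out3, ih]

lemma outWord3_hash (φ : β → List α) (u v w : List β) :
    GSM.outWord δ3 (out3 φ) 0 (hashWord u v w) =
      hashWord (u.flatMap φ) (v.flatMap φ) (w.flatMap φ) := by
  have hsplit : hashWord u v w =
      u.map some ++ (none :: (v.map some ++ (none :: w.reverse.map some))) := by
    simp [hashWord]
  rw [hsplit, GSM.outWord_append, dstar3_map_some, outWord3_map_some_ne2 φ (by decide)]
  have e1 : GSM.outWord δ3 (out3 φ) 0 (none :: (v.map some ++ (none :: w.reverse.map some))) =
      [none] ++ GSM.outWord δ3 (out3 φ) 1 (v.map some ++ (none :: w.reverse.map some)) := rfl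
  rw [e1, GSM.outWord_append, dstar3_map_some, outWord3_map_some_ne2 φ (by decide)]
  have e2 : GSM.outWord δ3 (out3 φ) 1 (none :: w.reverse.map some) =
      [none] ++ GSM.outWord δ3 (out3 φ) 2 (w.reverse.map some) := rfl
  rw [e2, outWord3_map_some_2]
  have e3 : w.reverse.flatMap (fun b => (φ b).reverse) = (w.flatMap φ).reverse := by
    rw [List.reverse_flatMap]
    rfl
  rw [e3]
  simp [hashWord]

end MpAux

/-- A monoid `M` is word hyperbolic (as a semigroup) if and only if, for any
surjective monoid homomorphism `Σ* → M` with `Σ` finite, there is a regular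
language `R ⊆ Σ*` projecting onto `M` whose multiplication table is
context-free. -/
theorem monoid_hyperbolic_iff {M : Type*} [Monoid M] {α : Type} [Fintype α]
    (f : α → M) (hf : Function.Surjective (evalM f)) :
    WordHyperbolic M ↔
      ∃ R : Language α, R.IsRegular ∧ (∀ m : M, ∃ w ∈ R, evalM f w = m) ∧
        (mulTableM f R).IsContextFree := by
  constructor
  · intro hW
    obtain ⟨β, instβ, g, hchoice, Rβ, hregβ, ⟨hne, honto⟩, hcfβ⟩ := hW
    choose φ hφval using fun b : β => hf (g b)
    have hev : ∀ u : List β, evalM f (u.flatMap φ) = evalM g u := by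
      intro u
      rw [evalM_flatMap, show (fun b => evalM f (φ b)) = g from funext hφval]
    refine ⟨(fun w => w.flatMap φ) '' Rβ, RegBind.bind_image_isRegular hregβ φ, ?_, ?_⟩
    · intro m
      obtain ⟨w, hwR, hw⟩ := honto m
      have hwne := evalS_ne_nil hw
      rw [evalS_eq_evalM g hwne] at hw
      refine ⟨w.flatMap φ, Set.mem_image_of_mem _ hwR, ?_⟩
      rw [hev]
      exact Option.some.inj hw
    · have himg := GSM.isContextFree_gsm_image hcfβ δ3 (out3 φ) 0
      suffices heq : mulTableM f ((fun w => w.flatMap φ) '' Rβ) =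
          GSM.outWord δ3 (out3 φ) 0 '' mulTable g Rβ by
        rw [heq]; exact himg
      ext x
      constructor
      · rintro ⟨u', v', w', hu', hv', hw', hcond, rfl⟩
        obtain ⟨u, huR, rfl⟩ := hu'
        obtain ⟨v, hvR, rfl⟩ := hv'
        obtain ⟨w, hwR, rfl⟩ := hw'
        have hu0 : u ≠ [] := fun h => hne (h ▸ huR)
        have hv0 : v ≠ [] := fun h => hne (h ▸ hvR)
        have hw0 : w ≠ [] := fun h => hne (h ▸ hwR)
        rw [hev, hev, hev] at hcond
        refine ⟨hashWord u v w, ⟨u, v, w, huR, hvR, hwR,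
          ⟨evalM g u, evalM g v, evalS_eq_evalM g hu0, evalS_eq_evalM g hv0, ?_⟩, rfl⟩,
          outWord3_hash φ u v w⟩
        rw [evalS_eq_evalM g hw0, hcond]
      · rintro ⟨t, ⟨u, v, w, huR, hvR, hwR, ⟨su, sv, h1e, h2e, h3e⟩, rfl⟩, rfl⟩
        have hu0 := evalS_ne_nil h1e
        have hv0 := evalS_ne_nil h2e
        have hw0 := evalS_ne_nil h3e
        rw [evalS_eq_evalM g hu0] at h1e
        rw [evalS_eq_evalM g hv0] at h2e
        rw [evalS_eq_evalM g hw0] at h3e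
        refine ⟨u.flatMap φ, v.flatMap φ, w.flatMap φ, Set.mem_image_of_mem _ huR,
          Set.mem_image_of_mem _ hvR, Set.mem_image_of_mem _ hwR, ?_,
          outWord3_hash φ u v w⟩
        rw [hev, hev, hev, Option.some.inj h1e, Option.some.inj h2e]
        exact (Option.some.inj h3e).symm
  · intro hR
    obtain ⟨R, hreg, honto, hcf⟩ := hR
    refine ⟨Option α, inferInstance, fOpt f, ?_, dec '' R,
      RegCl.decorate_isRegular hreg, ⟨?_, ?_⟩, ?_⟩
    · intro s
      obtain ⟨w, hwR, hw⟩ := honto s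
      exact ⟨dec w, by rw [evalS_dec, hw]⟩
    · rintro ⟨w, -, hw⟩
      exact dec_ne_nil w hw
    · intro s
      obtain ⟨w, hwR, hw⟩ := honto s
      exact ⟨dec w, ⟨w, hwR, rfl⟩, by rw [evalS_dec, hw]⟩
    · have h1 := GSM.isContextFree_gsm_image hcf δB out1 false
      have h2 := Language.IsContextFree.reverse h1
      have h3 := GSM.isContextFree_gsm_image h2 δB2 out2 false
      have h4 := Language.IsContextFree.reverse h3
      suffices heq : mulTable (fOpt f) (dec '' R) =
          Language.reverse (GSM.outWord δB2 out2 false ''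
            Language.reverse (GSM.outWord δB out1 false '' mulTableM f R)) by
        rw [heq]; exact h4
      ext x
      constructor
      · rintro ⟨u', v', w', hu', hv', hw', ⟨su, sv, h1e, h2e, h3e⟩, rfl⟩
        obtain ⟨u, huR, rfl⟩ := hu'
        obtain ⟨v, hvR, rfl⟩ := hv'
        obtain ⟨w, hwR, rfl⟩ := hw'
        rw [evalS_dec] at h1e h2e h3e
        have hsu := Option.some.inj h1e
        have hsv := Option.some.inj h2e
        have hcond : evalM f u * evalM f v = evalM f w := by
          rw [hsu, hsv]; exact (Option.some.inj h3e).symm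
        have htT : hashWord u v w ∈ mulTableM f R :=
          ⟨u, v, w, huR, hvR, hwR, hcond, rfl⟩
        refine Language.mem_reverse.mpr ?_
        refine ⟨(GSM.outWord δB out1 false (hashWord u v w)).reverse, ?_, ?_⟩
        · refine Language.mem_reverse.mpr ?_; rw [List.reverse_reverse]
          exact Set.mem_image_of_mem _ htT
        · rw [hash_dec]
          have hF := F_comp (x := hashWord u v w) (hashWord_ne_nil u v w)
          rw [← hF, List.reverse_reverse]
      · intro hx
        replace hx := Language.mem_reverse.mp hx
        obtain ⟨y, hy, hxy⟩ := hx
        replace hy := Language.mem_reverse.mp hy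
        obtain ⟨t₀, ht₀, hyt⟩ := hy
        obtain ⟨u, v, w, huR, hvR, hwR, hcond, rfl⟩ := ht₀
        have hx' : x = some none :: (hashWord u v w).flatMap hh ++ [some none] := by
          have hF := F_comp (x := hashWord u v w) (hashWord_ne_nil u v w)
          rw [← hF]
          have hy' : y = (GSM.outWord δB out1 false (hashWord u v w)).reverse := by
            rw [hyt, List.reverse_reverse]
          rw [← hy', hxy, List.reverse_reverse]
        rw [← hash_dec] at hx'
        exact ⟨dec u, dec v, dec w, ⟨u, huR, rfl⟩, ⟨v, hvR, rfl⟩, ⟨w, hwR, rfl⟩,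
          ⟨evalM f u, evalM f v, evalS_dec f u, evalS_dec f v,
            by rw [evalS_dec, ← hcond]⟩, hx'⟩
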